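/- Let A ≠ 0 be a compact normal bounded operator on a complex Hilbert space H, with canonical decomposition A = Σ_{n∈S} λₙ Pₙ (λₙ the distinct non-zero eigenvalues for n ∈ S \ {0}, Pₙ the orthogonal projections onto the corresponding eigenspaces, P₀ the orthogonal projection onto ker A). If g ∈ ran A, then the series f₀ = Σ_{n∈S\{0}} (1/λₙ) Pₙ g converges in H, A f₀ = g, and f₀ belongs to the closure of the Krylov subspace K(A,g); in particular f₀ is the unique Krylov solution of Af = g. -/

import Mathlib

/-!
Write `g = A f`. Then `f₀ = f - P₀ f = ∑_{n ≠ 0} Pₙ f` solves `A f₀ = g`, and `Pₙ f = λₙ⁻¹ Pₙ g`.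
If `y ⊥ K(A, g)`, the absolutely summable coefficients `cₙ = ⟪y, Pₙ f⟫` have vanishing moments
`∑ₙ λₙ ^ (k + 1) cₙ = ⟪y, A ^ k g⟫ = 0`. The eigenvalues accumulate only at `0`, so multiplying
`cₙ` by a Lagrange polynomial that is `1` at `λₘ` and vanishes at the finitely many other
eigenvalues of modulus `≥ |λₘ| / 2` leaves `λₘ` strictly dominant, and letting `k → ∞` forces
`cₘ = 0`; hence `y ⊥ f₀`. Uniqueness: for normal `A`, `K(A, g) ⊆ ran A ⊥ ker A`.
-/

open Filter Topology Function Polynomial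

theorem HasSum.subtype_diff_singleton {α β : Type*} [AddCommGroup α] [TopologicalSpace α]
    [IsTopologicalAddGroup α] {f : β → α} {a : α} {s : Set β} {b : β}
    (h : HasSum (fun x : s => f x) a) (hb : b ∈ s) :
    HasSum (fun x : ↥(s \ {b}) => f x) (a - f b) := by
  classical
  refine hasSum_subtype_iff_indicator.mpr ?_
  convert (hasSum_subtype_iff_indicator.mp h).update b 0 using 1
  · ext x
    rcases eq_or_ne x b with rfl | hx
    · simp
    · simp [Set.indicator, hx]
  · simp [Set.indicator_of_mem hb, sub_eq_neg_add]

theorem pow_mul_eq_pow_smul_of_mul_eq_smul {R A : Type*} [CommSemiring R] [Semiring A]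
    [Algebra R A] {a p : A} {c : R} (h : a * p = c • p) (k : ℕ) : a ^ k * p = c ^ k • p := by
  induction k with
  | zero => simp
  | succ k ih => rw [pow_succ, mul_assoc, h, mul_smul_comm, ih, smul_smul, pow_succ']

theorem IsIdempotentElem.one_le_norm {R : Type*} [NormedRing R] {p : R}
    (hp : IsIdempotentElem p) (hp0 : p ≠ 0) : 1 ≤ ‖p‖ := by
  have h := norm_mul_le p p
  rwa [hp.eq, le_mul_iff_one_le_left (norm_pos_iff.mpr hp0)] at h

section Moments

variable {ι : Type*}

theorem hasSum_pow_mul_eval_mul_eq_zero {R : Type*} [CommSemiring R] [TopologicalSpace R]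
    [IsTopologicalSemiring R] {lam c : ι → R}
    (hmom : ∀ k : ℕ, HasSum (fun i => lam i ^ (k + 1) * c i) 0) (p : R[X]) (k : ℕ) :
    HasSum (fun i => lam i ^ (k + 1) * (p.eval (lam i) * c i)) 0 := by
  have h := hasSum_sum fun j (_ : j ∈ Finset.range (p.natDegree + 1)) =>
    (hmom (k + j)).mul_left (p.coeff j)
  simp only [mul_zero, Finset.sum_const_zero] at h
  refine h.congr_fun fun i => ?_
  rw [eval_eq_sum_range, Finset.sum_mul, Finset.mul_sum]
  exact Finset.sum_congr rfl fun j _ => by ring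

theorem eq_zero_of_hasSum_pow_mul_of_norm_le {lam d : ι → ℂ} {m : ι} {ρ : ℝ}
    (hρ : 0 ≤ ρ) (hρm : ρ < ‖lam m‖) (hd : Summable fun i => ‖d i‖)
    (hsmall : ∀ i ≠ m, d i ≠ 0 → ‖lam i‖ ≤ ρ)
    (hmom : ∀ k : ℕ, HasSum (fun i => lam i ^ (k + 1) * d i) 0) : d m = 0 := by
  classical
  have hμ : 0 < ‖lam m‖ := hρ.trans_lt hρm
  have hbound (k : ℕ) : ‖d m‖ * ‖lam m‖ ^ (k + 1) ≤ (∑' i, ‖d i‖) * ρ ^ (k + 1) := by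
    have h := ((hmom k).update m 0).norm_le_of_bounded (hd.hasSum.mul_right (ρ ^ (k + 1)))
      fun i => ?_
    · simpa [norm_mul, mul_comm] using h
    rcases eq_or_ne i m with rfl | hi
    · simp only [update_self, norm_zero]
      positivity
    rw [update_of_ne hi, norm_mul, norm_pow, mul_comm]
    rcases eq_or_ne (d i) 0 with h0 | h0
    · simp [h0]
    · gcongr
      exact hsmall i hi h0
  have hlim : Tendsto (fun k : ℕ => (∑' i, ‖d i‖) * (ρ / ‖lam m‖) ^ (k + 1)) atTop (𝓝 0) := by
    have := (tendsto_pow_atTop_nhds_zero_of_lt_one (by positivity)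
      ((div_lt_one hμ).mpr hρm)).comp (tendsto_add_atTop_nat 1)
    simpa using this.const_mul (∑' i, ‖d i‖)
  refine norm_le_zero_iff.mp (ge_of_tendsto' hlim fun k => ?_)
  rw [div_pow, ← mul_div_assoc, le_div_iff₀ (by positivity)]
  exact hbound k

theorem eq_zero_of_hasSum_pow_mul_eq_zero {lam c : ι → ℂ} (hinj : Injective lam)
    (hlam : ∀ i, lam i ≠ 0) (hc : Summable fun i => ‖c i‖)
    (hfin : ∀ ε > 0, {i | c i ≠ 0 ∧ ε ≤ ‖lam i‖}.Finite)
    (hmom : ∀ k : ℕ, HasSum (fun i => lam i ^ (k + 1) * c i) 0) (m : ι) : c m = 0 := by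
  classical
  by_contra hcm
  set μ := ‖lam m‖
  have hμ : 0 < μ := norm_pos_iff.mpr (hlam m)
  set T := (hfin (μ / 2) (by positivity)).toFinset
  have hmT : m ∈ T := by
    simp only [T, Set.Finite.mem_toFinset, Set.mem_ofPred_eq]
    exact ⟨hcm, by linarith⟩
  have hsmall : ∀ i ∉ T, c i ≠ 0 → ‖lam i‖ ≤ μ / 2 := by
    intro i hi hci
    simp only [T, Set.Finite.mem_toFinset, Set.mem_ofPred_eq, not_and, not_le] at hi
    exact (hi hci).le
  set p := Lagrange.basis T lam m
  obtain ⟨M, hM⟩ : ∃ M, ∀ z ∈ Metric.closedBall (0 : ℂ) (μ / 2), ‖p.eval z‖ ≤ M :=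
    (isCompact_closedBall 0 _).exists_bound_of_continuousOn p.continuous.continuousOn
  have hdm := eq_zero_of_hasSum_pow_mul_of_norm_le (d := fun i => p.eval (lam i) * c i)
    (m := m) (ρ := μ / 2) (by positivity) (by linarith) ?_ ?_
    (hasSum_pow_mul_eval_mul_eq_zero hmom p)
  · exact hcm (by simpa [p, Lagrange.eval_basis_self hinj.injOn hmT] using hdm)
  · refine Summable.of_norm_bounded_eventually (hc.mul_left M) ?_
    filter_upwards [T.eventually_cofinite_notMem] with i hi
    rw [norm_norm, norm_mul]
    rcases eq_or_ne (c i) 0 with hci | hci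
    · simp [hci]
    · exact mul_le_mul_of_nonneg_right
        (hM _ (mem_closedBall_zero_iff.mpr (hsmall i hi hci))) (norm_nonneg _)
  · intro i him hdi
    refine hsmall i (fun hiT => left_ne_zero_of_mul hdi ?_) (right_ne_zero_of_mul hdi)
    exact Lagrange.eval_basis_of_ne him.symm hiT

end Moments

def krylovSubspace {R M : Type*} [Semiring R] [TopologicalSpace M] [AddCommMonoid M]
    [Module R M] (A : M →L[R] M) (g : M) : Submodule R M :=
  Submodule.span R (Set.range fun k : ℕ => (A ^ k) g)

section Operators

variable {R M ι : Type*} [CommRing R] [TopologicalSpace M] [AddCommGroup M] [Module R M]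

theorem krylovSubspace_le_range {A : M →L[R] M} {g : M}
    (hg : g ∈ LinearMap.range (A : M →ₗ[R] M)) :
    krylovSubspace A g ≤ LinearMap.range (A : M →ₗ[R] M) := by
  obtain ⟨w, rfl⟩ := hg
  refine Submodule.span_le.mpr ?_
  rintro _ ⟨k, rfl⟩
  refine ⟨(A ^ k) w, ?_⟩
  change A ((A ^ k) w) = (A ^ k) (A w)
  rw [← mul_apply_eq_comp, ← pow_succ', pow_succ, mul_apply_eq_comp]

theorem mul_eq_smul_of_range_le_ker [IsTopologicalAddGroup M] [ContinuousConstSMul R M]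
    {A P : M →L[R] M} {c : R}
    (h : LinearMap.range (P : M →ₗ[R] M) ≤ LinearMap.ker ((A - c • 1 : M →L[R] M) : M →ₗ[R] M)) :
    A * P = c • P := by
  ext x
  simpa [sub_eq_zero] using h ⟨x, rfl⟩

theorem mul_eq_smul_of_hasSum_apply [T2Space M] [ContinuousConstSMul R M] {A : M →L[R] M}
    {P : ι → M →L[R] M} {lam : ι → R}
    (hres : ∀ x, HasSum (fun i => P i x) x) (hP : ∀ i, IsIdempotentElem (P i))
    (horth : Pairwise fun i j => P i * P j = 0) (hAP : ∀ i, A * P i = lam i • P i) (i : ι) :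
    P i * A = lam i • P i := by
  ext x
  have hterm (j : ι) : P i (A (P j x)) = lam j • (P i * P j) x := by
    rw [← mul_apply_eq_comp A, hAP]; simp
  refine ((P i * A).hasSum (hres x)).unique ?_
  convert hasSum_single i fun j hji => ?_ using 1
  · simp [hterm, (hP i).eq]
  · simp [hterm, horth hji.symm]

end Operators

section HilbertSpace

variable {𝕜 E ι : Type*} [RCLike 𝕜] [NormedAddCommGroup E] [InnerProductSpace 𝕜 E]
  [CompleteSpace E]

theorem eq_of_apply_eq_of_mem_closure_krylovSubspace {A : E →L[𝕜] E} (hA : IsStarNormal A)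
    {g f f' : E} (hg : g ∈ LinearMap.range (A : E →ₗ[𝕜] E))
    (hf : f ∈ (krylovSubspace A g).topologicalClosure)
    (hf' : f' ∈ (krylovSubspace A g).topologicalClosure) (h : A f = A f') : f = f' := by
  have hK : (krylovSubspace A g).topologicalClosure ≤ (LinearMap.ker (A : E →ₗ[𝕜] E))ᗮ :=
    Submodule.topologicalClosure_minimal _
      ((krylovSubspace_le_range hg).trans
        (ContinuousLinearMap.IsStarNormal.orthogonal_range hA ▸
          Submodule.le_orthogonal_orthogonal _))
      (Submodule.isClosed_orthogonal _)
  have hmem : f - f' ∈ LinearMap.ker (A : E →ₗ[𝕜] E) ⊓ (LinearMap.ker (A : E →ₗ[𝕜] E))ᗮ :=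
    ⟨by simp [h], hK (sub_mem hf hf')⟩
  rw [Submodule.inf_orthogonal_eq_bot, Submodule.mem_bot] at hmem
  exact sub_eq_zero.mp hmem

theorem summable_norm_sq_apply {P : ι → E →L[𝕜] E} (hP : ∀ i, IsStarProjection (P i))
    (horth : Pairwise fun i j => P i * P j = 0) {x : E} (hx : Summable fun i => P i x) :
    Summable fun i => ‖P i x‖ ^ 2 := by
  set V : ι → Submodule 𝕜 E := fun i => LinearMap.range (P i : E →ₗ[𝕜] E)
  have hfam : OrthogonalFamily 𝕜 (fun i => V i) fun i => (V i).subtypeₗᵢ := by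
    refine OrthogonalFamily.of_pairwise fun i j hij => Submodule.isOrtho_iff_inner_eq.mpr ?_
    rintro _ ⟨a, rfl⟩ _ ⟨b, rfl⟩
    rw [(hP i).isSelfAdjoint.isSymmetric]
    simp [← mul_apply_eq_comp, horth hij]
  exact (hfam.summable_iff_norm_sq_summable
    fun i => (⟨P i x, LinearMap.mem_range_self _ x⟩ : V i)).mp hx

end HilbertSpace

theorem mem_closure_krylovSubspace_of_hasSum {H ι : Type*} [NormedAddCommGroup H]
    [InnerProductSpace ℂ H] [CompleteSpace H] {A : H →L[ℂ] H} {P : ι → H →L[ℂ] H} {lam : ι → ℂ}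
    (hP : ∀ i, IsStarProjection (P i)) (horth : Pairwise fun i j => P i * P j = 0)
    (hsum : ∀ x, Summable fun i => P i x) (hAP : ∀ i, A * P i = lam i • P i)
    (hlam : ∀ i, lam i ≠ 0) (hinj : Injective lam)
    (hlim : Tendsto (fun i => lam i • P i) cofinite (𝓝 0)) {f f₀ : H}
    (hf : HasSum (fun i => P i f) f₀) :
    f₀ ∈ (krylovSubspace A (A f₀)).topologicalClosure := by
  rw [← Submodule.orthogonal_orthogonal_eq_closure, Submodule.mem_orthogonal]
  intro y hy
  have hc : HasSum (fun i => inner ℂ y (P i f)) (inner ℂ y f₀) := (innerSL ℂ y).hasSum hf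
  suffices hc0 : ∀ i, inner ℂ y (P i f) = 0 by
    exact hc.unique (by simp [hc0])
  have hinner_proj (i : ι) : inner ℂ y (P i f) = inner ℂ (P i y) (P i f) := calc
    inner ℂ y (P i f) = inner ℂ y (P i (P i f)) := by
      rw [← mul_apply_eq_comp, (hP i).isIdempotentElem.eq]
    _ = inner ℂ (P i y) (P i f) := ((hP i).isSelfAdjoint.isSymmetric _ _).symm
  refine eq_zero_of_hasSum_pow_mul_eq_zero hinj hlam ?_ ?_ ?_
  · have hy2 := summable_norm_sq_apply hP horth (hsum y)
    have hf2 := summable_norm_sq_apply hP horth (hsum f)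
    refine .of_nonneg_of_le (fun _ => norm_nonneg _) (fun i => ?_) ((hy2.add hf2).div_const 2)
    rw [hinner_proj]
    nlinarith [norm_inner_le_norm (𝕜 := ℂ) (P i y) (P i f),
      two_mul_le_add_sq ‖P i y‖ ‖P i f‖]
  · intro ε hε
    have hnorm_lt : ∀ᶠ i in cofinite, ‖lam i • P i‖ < ε :=
      hlim.norm.eventually (gt_mem_nhds (by simpa using hε))
    refine (eventually_cofinite.mp hnorm_lt).subset ?_
    rintro i ⟨hci, hεi⟩
    have hPi : P i ≠ 0 := fun h => hci (by simp [h])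
    have := (hP i).isIdempotentElem.one_le_norm hPi
    simp only [Set.mem_ofPred_eq, norm_smul, not_lt]
    nlinarith [norm_nonneg (lam i)]
  · intro k
    have h : HasSum (fun i => inner ℂ y ((A ^ (k + 1)) (P i f)))
        (inner ℂ y ((A ^ (k + 1)) f₀)) :=
      (innerSL ℂ y).hasSum ((A ^ (k + 1)).hasSum hf)
    have hK : (A ^ (k + 1)) f₀ ∈ krylovSubspace A (A f₀) := by
      rw [pow_succ, mul_apply_eq_comp]
      exact Submodule.subset_span ⟨k, rfl⟩
    rw [Submodule.inner_left_of_mem_orthogonal hK hy] at h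
    refine h.congr_fun fun i => ?_
    rw [← mul_apply_eq_comp, pow_mul_eq_pow_smul_of_mul_eq_smul (hAP i),
      smul_apply, inner_smul_right]

theorem compact_normal_krylov_solution_formula_general
    {H : Type*} [NormedAddCommGroup H] [InnerProductSpace ℂ H] [CompleteSpace H]
    (A : H →L[ℂ] H) (hnormal : IsStarNormal A)
    (S : Set ℕ) (h0S : 0 ∈ S) (lam : ℕ → ℂ) (P : ℕ → H →L[ℂ] H)
    (hlam0 : lam 0 = 0)
    (hlam_ne : ∀ n ∈ S, n ≠ 0 → lam n ≠ 0)
    (hlam_inj : ∀ m ∈ S, ∀ n ∈ S, lam m = lam n → m = n)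
    (hP_sa : ∀ n ∈ S, IsSelfAdjoint (P n))
    (hP_idem : ∀ n ∈ S, IsIdempotentElem (P n))
    (hP_orth : ∀ m ∈ S, ∀ n ∈ S, m ≠ n → P m * P n = 0)
    (hP0 : LinearMap.range (P 0 : H →ₗ[ℂ] H) = LinearMap.ker (A : H →ₗ[ℂ] H))
    (hPeig : ∀ n ∈ S, n ≠ 0 →
      LinearMap.range (P n : H →ₗ[ℂ] H) = LinearMap.ker ((A - lam n • (1 : H →L[ℂ] H) : H →L[ℂ] H) : H →ₗ[ℂ] H))
    (hAsum : HasSum (fun n : S => lam n • P n) A)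
    (hres : ∀ x : H, HasSum (fun n : S => P n x) x)
    (g : H) (hg : g ∈ LinearMap.range (A : H →ₗ[ℂ] H)) :
    ∃ f₀ : H,
      HasSum (fun n : ↥(S \ {0}) => (lam n)⁻¹ • P n g) f₀ ∧
      A f₀ = g ∧
      f₀ ∈ (Submodule.span ℂ (Set.range fun k : ℕ => (A ^ k) g)).topologicalClosure ∧
      (∀ f ∈ (Submodule.span ℂ (Set.range fun k : ℕ => (A ^ k) g)).topologicalClosure,
        A f = g → f = f₀) := by
  obtain ⟨f, rfl⟩ := hg
  have hAP : ∀ n ∈ S, A * P n = lam n • P n := fun n hn => mul_eq_smul_of_range_le_ker <| by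
    rcases eq_or_ne n 0 with rfl | hn0
    · simp [hlam0, hP0]
    · exact (hPeig n hn hn0).le
  have horth : Pairwise fun m n : S => P m * P n = 0 := fun m n hmn =>
    hP_orth m m.2 n n.2 (Subtype.coe_ne_coe.mpr hmn)
  have hPA : ∀ n : S, P n * A = lam n • P n :=
    mul_eq_smul_of_hasSum_apply hres (fun n => hP_idem n n.2) horth fun n => hAP n n.2
  have hsum (x : H) : HasSum (fun n : ↥(S \ {0}) => P n x) (x - P 0 x) :=
    (hres x).subtype_diff_singleton (f := fun n => P n x) h0S
  have hAf₀ : A (f - P 0 f) = A f := by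
    rw [map_sub, ← mul_apply_eq_comp, hAP 0 h0S, hlam0, zero_smul]
    simp
  have hclosure := mem_closure_krylovSubspace_of_hasSum (A := A)
    (fun n : ↥(S \ {0}) => ⟨hP_idem n n.2.1, hP_sa n n.2.1⟩)
    (fun m n hmn => hP_orth m m.2.1 n n.2.1 (Subtype.coe_ne_coe.mpr hmn))
    (fun x => (hsum x).summable) (fun n => hAP n n.2.1) (fun n => hlam_ne n n.2.1 n.2.2)
    (fun m n h => Subtype.ext (hlam_inj m m.2.1 n n.2.1 h))
    (hAsum.summable.tendsto_cofinite_zero.comp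
      (Set.inclusion_injective Set.sdiff_subset).tendsto_cofinite)
    (hsum f)
  rw [hAf₀] at hclosure
  refine ⟨f - P 0 f, (hsum f).congr_fun fun n => ?_, hAf₀, hclosure, fun f' hf' h =>
    eq_of_apply_eq_of_mem_closure_krylovSubspace hnormal ⟨f, rfl⟩ hf' hclosure
      (h.trans hAf₀.symm)⟩
  change (lam n)⁻¹ • P n (A f) = P n f
  rw [← mul_apply_eq_comp, hPA ⟨n, n.2.1⟩, smul_apply, inv_smul_smul₀ (hlam_ne n n.2.1 n.2.2)]

/-- Let `A ≠ 0` be a compact normal bounded operator on a complex Hilbert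
space with canonical decomposition `A = Σ_{n ∈ S} λₙ Pₙ` (notation as in the canonical form:
`λ₀ = 0`, the `λₙ`, `n ∈ S \ {0}`, distinct non-zero eigenvalues with mutually orthogonal
eigenprojections `Pₙ`, `P₀` the orthogonal projection onto `ker A`, `Σ Pₙ = 1` strongly).
If `g ∈ ran A`, then the series `f₀ = Σ_{n ∈ S \ {0}} λₙ⁻¹ Pₙ g` converges in `H`,
`A f₀ = g`, `f₀` lies in the closure of the Krylov subspace `K(A,g)`, and `f₀` is the unique
Krylov solution of `A f = g`. -/
theorem compact_normal_krylov_solution_formula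
    {H : Type*} [NormedAddCommGroup H] [InnerProductSpace ℂ H] [CompleteSpace H]
    (A : H →L[ℂ] H) (hcpt : IsCompactOperator A) (hnormal : IsStarNormal A)
    (hAne : A ≠ 0)
    (S : Set ℕ) (h0S : 0 ∈ S) (lam : ℕ → ℂ) (P : ℕ → H →L[ℂ] H)
    (hlam0 : lam 0 = 0)
    (hlam_ne : ∀ n ∈ S, n ≠ 0 → lam n ≠ 0)
    (hlam_inj : ∀ m ∈ S, ∀ n ∈ S, lam m = lam n → m = n)
    (hP_sa : ∀ n ∈ S, IsSelfAdjoint (P n))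
    (hP_idem : ∀ n ∈ S, IsIdempotentElem (P n))
    (hP_orth : ∀ m ∈ S, ∀ n ∈ S, m ≠ n → P m * P n = 0)
    (hP0 : LinearMap.range (P 0 : H →ₗ[ℂ] H) = LinearMap.ker (A : H →ₗ[ℂ] H))
    (hPeig : ∀ n ∈ S, n ≠ 0 →
      LinearMap.range (P n : H →ₗ[ℂ] H) = LinearMap.ker ((A - lam n • (1 : H →L[ℂ] H) : H →L[ℂ] H) : H →ₗ[ℂ] H))
    (hAsum : HasSum (fun n : S => lam n • P n) A)
    (hres : ∀ x : H, HasSum (fun n : S => P n x) x)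
    (g : H) (hg : g ∈ LinearMap.range (A : H →ₗ[ℂ] H)) :
    ∃ f₀ : H,
      HasSum (fun n : ↥(S \ {0}) => (lam n)⁻¹ • P n g) f₀ ∧
      A f₀ = g ∧
      f₀ ∈ (Submodule.span ℂ (Set.range fun k : ℕ => (A ^ k) g)).topologicalClosure ∧
      (∀ f ∈ (Submodule.span ℂ (Set.range fun k : ℕ => (A ^ k) g)).topologicalClosure,
        A f = g → f = f₀) :=
  compact_normal_krylov_solution_formula_general A hnormal S h0S lam P hlam0 hlam_ne hlam_inj hP_sa
    hP_idem hP_orth hP0 hPeig hAsum hres g hg
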